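/- arXiv:1108.4702 — 9 statements merged into one kernel-verified Lean document; each statement's English description precedes it below -/
import Mathlib

section
/- For integers n, k with 0 ≤ k ≤ n and an integer q ≥ 2, the quantity (-1)^(k(n-k)) times the Gaussian binomial coefficient [n choose k] evaluated at -q is a positive integer. -/
/-- The Gaussian binomial coefficient `[n choose k]_q`, evaluated at an integer `q`,
defined via the q-Pascal recurrence `[n,k]_q = [n-1,k]_q + q^(n-k) [n-1,k-1]_q`. -/
def gaussBinom (q : ℤ) : ℕ → ℕ → ℤ
  | _, 0 => 1
  | 0, _ + 1 => 0
  | n + 1, k + 1 => gaussBinom q n (k + 1) + q ^ (n - k) * gaussBinom q n k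

lemma gaussBinom_zero_right (q : ℤ) (n : ℕ) : gaussBinom q n 0 = 1 := by
  cases n <;> rfl

lemma gaussBinom_eq_zero (q : ℤ) : ∀ n k : ℕ, n < k → gaussBinom q n k = 0 := by
  intro n
  induction n with
  | zero =>
    intro k hk
    cases k with
    | zero => omega
    | succ k => rfl
  | succ n ih =>
    intro k hk
    cases k with
    | zero => omega
    | succ k =>
      show gaussBinom q n (k+1) + q ^ (n-k) * gaussBinom q n k = 0
      rw [ih (k+1) (by omega), ih k (by omega)]
      ring

lemma gauss_prod (r : ℤ) : ∀ n k : ℕ,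
    gaussBinom r n k * ∏ i ∈ Finset.range k, (r ^ (i+1) - 1)
      = ∏ i ∈ Finset.range k, (r ^ (n - i) - 1) := by
  intro n
  induction n with
  | zero =>
    intro k
    cases k with
    | zero => simp [gaussBinom]
    | succ k =>
      have hr : ∏ i ∈ Finset.range (k+1), (r ^ (0 - i) - 1) = 0 :=
        Finset.prod_eq_zero (i := 0) (by simp) (by simp)
      rw [gaussBinom_eq_zero r 0 (k+1) (by omega), hr]
      ring
  | succ n ih =>
    intro k
    cases k with
    | zero => simp [gaussBinom_zero_right]
    | succ k =>
      by_cases hkn : k ≤ n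
      · show (gaussBinom r n (k+1) + r ^ (n-k) * gaussBinom r n k) * _ = _
        have h1 := ih (k+1)
        have h2 := ih k
        rw [Finset.prod_range_succ, Finset.prod_range_succ] at h1
        rw [Finset.prod_range_succ, Finset.prod_range_succ']
        simp only [Nat.succ_sub_succ, Nat.sub_zero] at *
        have hpow : r ^ (n-k) * r ^ (k+1) = r ^ (n+1) := by
          rw [← pow_add]; congr 1; omega
        linear_combination h1 + r^(n-k)*(r^(k+1)-1)*h2 +
          (∏ i ∈ Finset.range k, (r^(n-i)-1)) * hpow
      · have hr : ∏ i ∈ Finset.range (k+1), (r ^ (n+1 - i) - 1) = 0 :=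
          Finset.prod_eq_zero (i := n+1) (Finset.mem_range.mpr (by omega)) (by simp)
        rw [gaussBinom_eq_zero r (n+1) (k+1) (by omega), hr]
        ring

/-- For `0 ≤ k ≤ n` and an integer `q ≥ 2`, the quantity
`(-1)^(k(n-k)) · [n choose k]_{-q}` is a positive integer. -/
theorem stmt_0 (n k : ℕ) (hk : k ≤ n) (q : ℤ) (hq : 2 ≤ q) :
    0 < (-1 : ℤ) ^ (k * (n - k)) * gaussBinom (-q) n k := by
  have key := gauss_prod (-q) n k
  have hfac : ∀ j : ℕ, (-q) ^ j - 1 = (-1:ℤ)^j * (q^j - (-1)^j) := by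
    intro j
    have h1 : ((-1:ℤ))^j * (-1:ℤ)^j = 1 := by
      rw [← pow_add]; exact Even.neg_one_pow ⟨j, rfl⟩
    rw [neg_pow]
    linear_combination h1
  rw [Finset.prod_congr rfl (fun i _ => hfac (i+1)),
      Finset.prod_congr rfl (fun i _ => hfac (n-i)),
      Finset.prod_mul_distrib, Finset.prod_mul_distrib,
      Finset.prod_pow_eq_pow_sum, Finset.prod_pow_eq_pow_sum] at key
  set SA := ∑ i ∈ Finset.range k, (i+1) with hSA
  set SB := ∑ i ∈ Finset.range k, (n-i) with hSB
  set A := ∏ i ∈ Finset.range k, (q^(i+1) - (-1:ℤ)^(i+1)) with hAd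
  set B := ∏ i ∈ Finset.range k, (q^(n-i) - (-1:ℤ)^(n-i)) with hBd
  have hle1 : ∀ j : ℕ, (-1:ℤ)^j ≤ 1 := by
    intro j
    rcases neg_one_pow_eq_or ℤ j with h | h <;> rw [h] <;> norm_num
  have hA : 0 < A := by
    apply Finset.prod_pos
    intro i _
    have h1 : (1:ℤ) < q ^ (i+1) := one_lt_pow₀ (by omega) (Nat.succ_ne_zero i)
    have := hle1 (i+1)
    omega
  have hB : 0 < B := by
    apply Finset.prod_pos
    intro i hi
    have hi' : i < k := Finset.mem_range.mp hi
    have h1 : (1:ℤ) < q ^ (n-i) := one_lt_pow₀ (by omega) (by omega)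
    have := hle1 (n-i)
    omega
  have hpar : Even (k*(n-k) + (SA + SB)) := by
    have hsum : SA + SB = k * (n+1) := by
      rw [hSA, hSB, ← Finset.sum_add_distrib]
      rw [Finset.sum_congr rfl (fun i hi => by
        have := Finset.mem_range.mp hi; omega : ∀ i ∈ Finset.range k, (i+1)+(n-i) = n+1)]
      simp [Finset.sum_const, mul_comm]
    have h2 : k*(n+1) = k*(n-k) + k*(k+1) := by
      have h : n + 1 = (n-k) + (k+1) := by omega
      rw [h, Nat.mul_add]
    rw [hsum, h2]
    have h3 : k*(n-k) + (k*(n-k) + k*(k+1)) = 2*(k*(n-k)) + k*(k+1) := by ring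
    rw [h3]
    exact (even_two_mul _).add (Nat.even_mul_succ_self k)
  have hsqK : (-1:ℤ)^(k*(n-k)) * (-1:ℤ)^(k*(n-k)) = 1 := by
    rw [← pow_add]; exact Even.neg_one_pow ⟨k*(n-k), rfl⟩
  have hsqB : (-1:ℤ)^SB * (-1:ℤ)^SB = 1 := by
    rw [← pow_add]; exact Even.neg_one_pow ⟨SB, rfl⟩
  have hone : (-1:ℤ)^(k*(n-k)) * ((-1:ℤ)^SA * (-1:ℤ)^SB) = 1 := by
    rw [← pow_add, ← pow_add]; exact Even.neg_one_pow hpar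
  have hGA : (-1:ℤ)^(k*(n-k)) * gaussBinom (-q) n k * A = B := by
    linear_combination ((-1:ℤ)^SB)*key + B*hsqB
      + (-((-1:ℤ)^(k*(n-k)) * gaussBinom (-q) n k * A))*hone
      + ((-1:ℤ)^SA*(-1:ℤ)^SB* gaussBinom (-q) n k * A)*hsqK
  nlinarith [hGA, hA, hB]
end

section
/- For integers n, k with 0 ≤ k ≤ n and an integer q ≥ 2, one has (-1)^(k(n-k))·[n choose k]_{-q} ≤ [n choose k]_q, where [n choose k]_q denotes the Gaussian binomial coefficient evaluated at q. -/
lemma gaussBinom_abs_le (q : ℤ) (hq : 0 ≤ q) :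
    ∀ n k, |gaussBinom (-q) n k| ≤ gaussBinom q n k := by
  intro n
  induction n with
  | zero => intro k; cases k <;> simp [gaussBinom]
  | succ n ih =>
    intro k
    cases k with
    | zero => simp [gaussBinom]
    | succ k =>
      show |gaussBinom (-q) n (k+1) + (-q) ^ (n - k) * gaussBinom (-q) n k| ≤
        gaussBinom q n (k+1) + q ^ (n - k) * gaussBinom q n k
      calc |gaussBinom (-q) n (k+1) + (-q) ^ (n - k) * gaussBinom (-q) n k|
          ≤ |gaussBinom (-q) n (k+1)| + |(-q) ^ (n - k) * gaussBinom (-q) n k| :=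
            abs_add_le _ _
        _ = |gaussBinom (-q) n (k+1)| + q ^ (n - k) * |gaussBinom (-q) n k| := by
            rw [abs_mul, abs_pow, abs_neg, abs_of_nonneg hq]
        _ ≤ gaussBinom q n (k+1) + q ^ (n - k) * gaussBinom q n k :=
            add_le_add (ih _) (mul_le_mul_of_nonneg_left (ih _) (pow_nonneg hq _))

/-- For `0 ≤ k ≤ n` and an integer `q ≥ 2`,
`(-1)^(k(n-k)) · [n choose k]_{-q} ≤ [n choose k]_q`. -/
theorem stmt_1 (n k : ℕ) (hk : k ≤ n) (q : ℤ) (hq : 2 ≤ q) :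
    (-1 : ℤ) ^ (k * (n - k)) * gaussBinom (-q) n k ≤ gaussBinom q n k := by
  calc (-1 : ℤ) ^ (k * (n - k)) * gaussBinom (-q) n k
      ≤ |(-1 : ℤ) ^ (k * (n - k)) * gaussBinom (-q) n k| := le_abs_self _
    _ = |gaussBinom (-q) n k| := by
        rw [abs_mul, abs_pow, abs_neg, abs_one, one_pow, one_mul]
    _ ≤ gaussBinom q n k := gaussBinom_abs_le q (by linarith) n k
end

section
/- Define a pairing on binary words ω of length n with k ones recursively: if k is odd and n ≥ 2, pair the first two letters and recurse on the rest; if k is even, leave the first letter unpaired and recurse. Let Ω'_{n,k} be the set of such words with no paired occurrence of (0,1), p(ω) the number of paired (1,0) occurrences, and a(ω) = inv(ω) - p(ω). Then for every integer q, (-1)^(k(n-k))·[n choose k]_{-q} = ∑_{ω ∈ Ω'_{n,k}} q^{a(ω)}·(q-1)^{p(ω)}. -/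
/-- Number of inversions of a binary word: pairs `i < j` with `ω_i = 1` (true)
and `ω_j = 0` (false). -/
def invStat : List Bool → ℕ
  | [] => 0
  | a :: rest => (if a then rest.count false else 0) + invStat rest

/-- Number of paired occurrences of `(1,0)` under the recursive pairing:
if the number of ones is odd, pair the first two letters and recurse on the rest;
if it is even, leave the first letter unpaired and recurse. -/
def pairedStat : List Bool → ℕ
  | [] => 0
  | [_] => 0
  | a :: b :: rest =>
    if (a :: b :: rest).count true % 2 = 1 then
      (if a = true ∧ b = false then 1 else 0) + pairedStat rest
    else pairedStat (b :: rest)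

/-- A binary word has no paired occurrence of `(0,1)` under the recursive pairing. -/
def paired01free : List Bool → Bool
  | [] => true
  | [_] => true
  | a :: b :: rest =>
    if (a :: b :: rest).count true % 2 = 1 then
      !(a = false && b = true) && paired01free rest
    else paired01free (b :: rest)

namespace Aux

lemma count_add (l : List Bool) : l.count true + l.count false = l.length := by
  induction l with
  | nil => simp
  | cons a l ih => cases a <;> simp [List.count_cons] <;> omega

lemma p_le_inv_aux : ∀ (n : ℕ) (l : List Bool), l.length ≤ n → pairedStat l ≤ invStat l := by
  intro n
  induction n using Nat.strong_induction_on with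
  | _ n ih =>
    intro l hl
    match l with
    | [] => simp [pairedStat, invStat]
    | [a] => simp [pairedStat, invStat]
    | a :: b :: rest =>
      simp only [List.length_cons] at hl
      have hn : 2 ≤ n := by omega
      have hr : pairedStat rest ≤ invStat rest :=
        ih (n - 1) (by omega) rest (by omega)
      have hbr : pairedStat (b :: rest) ≤ invStat (b :: rest) :=
        ih (n - 1) (by omega) (b :: rest) (by simp only [List.length_cons]; omega)
      by_cases h : (a :: b :: rest).count true % 2 = 1
      · rw [pairedStat, if_pos h]
        cases a <;> cases b <;> simp [invStat, List.count_cons] at * <;> omega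
      · rw [pairedStat, if_neg h]
        cases a <;> simp [invStat] at * <;> omega

lemma p_le_inv (l : List Bool) : pairedStat l ≤ invStat l := p_le_inv_aux l.length l le_rfl

lemma pairedStat_cons_even (a : Bool) (l : List Bool)
    (h : ¬((a :: l).count true % 2 = 1)) : pairedStat (a :: l) = pairedStat l := by
  match l with
  | [] => simp [pairedStat]
  | b :: rest => rw [pairedStat, if_neg h]

lemma paired01free_cons_even (a : Bool) (l : List Bool)
    (h : ¬((a :: l).count true % 2 = 1)) : paired01free (a :: l) = paired01free l := by
  match l with
  | [] => simp [paired01free]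
  | b :: rest => rw [paired01free, if_neg h]

lemma invStat_true (l : List Bool) : invStat (true :: l) = l.count false + invStat l := by
  simp [invStat]

lemma invStat_false (l : List Bool) : invStat (false :: l) = invStat l := by
  simp [invStat]

def wgt (q : ℤ) (k : ℕ) (l : List Bool) : ℤ :=
  if l.count true = k ∧ paired01free l = true then
    q ^ (invStat l - pairedStat l) * (q - 1) ^ pairedStat l
  else 0

lemma wgt_false_even (q : ℤ) (k : ℕ) (hk : k % 2 = 0) (l : List Bool) :
    wgt q k (false :: l) = wgt q k l := by
  unfold wgt
  have hcc : (false :: l).count true = l.count true := by simp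
  rcases eq_or_ne (l.count true) k with hc | hc
  · have h : ¬((false :: l).count true % 2 = 1) := by omega
    rw [paired01free_cons_even _ _ h, pairedStat_cons_even _ _ h, invStat_false, hcc]
  · rw [if_neg (by rw [hcc]; tauto), if_neg (by tauto)]

lemma wgt_true_even (q : ℤ) (k : ℕ) (hk : k % 2 = 0) (hk1 : 1 ≤ k) (l : List Bool) :
    wgt q k (true :: l) = q ^ (l.length + 1 - k) * wgt q (k - 1) l := by
  unfold wgt
  have hcc : (true :: l).count true = l.count true + 1 := by simp
  rcases eq_or_ne (l.count true) (k - 1) with hc | hc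
  · have h : ¬((true :: l).count true % 2 = 1) := by omega
    rw [paired01free_cons_even _ _ h, pairedStat_cons_even _ _ h]
    by_cases hf : paired01free l = true
    · rw [if_pos ⟨by omega, hf⟩, if_pos ⟨hc, hf⟩]
      have hcf : l.count false = l.length + 1 - k := by
        have h1 := count_add l
        have h2 : l.count true ≤ l.length := List.count_le_length
        omega
      rw [invStat_true, hcf, Nat.add_sub_assoc (p_le_inv l), pow_add, mul_assoc]
    · rw [if_neg (by tauto), if_neg (by tauto)]
      simp
  · rw [if_neg (by rw [hcc]; rintro ⟨h1, -⟩; omega), if_neg (by tauto)]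
    simp

lemma wgt_true_zero (q : ℤ) (l : List Bool) : wgt q 0 (true :: l) = 0 := by
  unfold wgt
  rw [if_neg]
  rintro ⟨h1, -⟩
  simp at h1


lemma wgt_ff_odd (q : ℤ) (k : ℕ) (hk : k % 2 = 1) (l : List Bool) :
    wgt q k (false :: false :: l) = wgt q k l := by
  unfold wgt
  have hcc : (false :: false :: l).count true = l.count true := by simp
  rcases eq_or_ne (l.count true) k with hc | hc
  · have h : (false :: false :: l).count true % 2 = 1 := by omega
    rw [paired01free, if_pos h, pairedStat, if_pos h]
    simp [invStat]
  · rw [if_neg (by rw [hcc]; tauto), if_neg (by tauto)]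

lemma wgt_ft_odd (q : ℤ) (k : ℕ) (hk : k % 2 = 1) (l : List Bool) :
    wgt q k (false :: true :: l) = 0 := by
  unfold wgt
  rw [if_neg]
  rintro ⟨h1, h2⟩
  have hcc : (false :: true :: l).count true = l.count true + 1 := by simp
  have h : (false :: true :: l).count true % 2 = 1 := by omega
  rw [paired01free, if_pos h] at h2
  simp at h2

lemma wgt_tf_odd (q : ℤ) (k : ℕ) (hk : k % 2 = 1) (l : List Bool) :
    wgt q k (true :: false :: l) = q ^ (l.length + 1 - k) * (q - 1) * wgt q (k - 1) l := by
  unfold wgt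
  have hcc : (true :: false :: l).count true = l.count true + 1 := by simp
  rcases eq_or_ne (l.count true) (k - 1) with hc | hc
  · have h : (true :: false :: l).count true % 2 = 1 := by omega
    have e1 : paired01free (true :: false :: l) = paired01free l := by
      rw [paired01free, if_pos h]; norm_num
    have e2 : pairedStat (true :: false :: l) = 1 + pairedStat l := by
      rw [pairedStat, if_pos h]; norm_num
    rw [e1, e2, invStat_true, invStat_false]
    by_cases hf : paired01free l = true
    · rw [if_pos ⟨by omega, hf⟩, if_pos ⟨hc, hf⟩]
      have hcf : l.count false = l.length + 1 - k := by
        have h1 := count_add l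
        have h2 : l.count true ≤ l.length := List.count_le_length
        omega
      have hcf2 : (false :: l).count false = l.count false + 1 := by simp
      rw [hcf2, hcf]
      have he : l.length + 1 - k + 1 + invStat l - (1 + pairedStat l)
          = (l.length + 1 - k) + (invStat l - pairedStat l) := by
        have := p_le_inv l; omega
      rw [he, pow_add, add_comm 1 (pairedStat l), pow_add, pow_one]
      ring
    · rw [if_neg (by tauto), if_neg (by tauto)]
      simp
  · rw [if_neg (by rw [hcc]; rintro ⟨h1, -⟩; omega), if_neg (by tauto)]
    simp

lemma wgt_tt_odd (q : ℤ) (k : ℕ) (hk : k % 2 = 1) (hk2 : 2 ≤ k) (l : List Bool) :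
    wgt q k (true :: true :: l) = q ^ (2 * (l.length + 2 - k)) * wgt q (k - 2) l := by
  unfold wgt
  have hcc : (true :: true :: l).count true = l.count true + 2 := by simp
  rcases eq_or_ne (l.count true) (k - 2) with hc | hc
  · have h : (true :: true :: l).count true % 2 = 1 := by omega
    have e1 : paired01free (true :: true :: l) = paired01free l := by
      rw [paired01free, if_pos h]; norm_num
    have e2 : pairedStat (true :: true :: l) = pairedStat l := by
      rw [pairedStat, if_pos h]; norm_num
    rw [e1, e2, invStat_true, invStat_true]
    by_cases hf : paired01free l = true
    · rw [if_pos ⟨by omega, hf⟩, if_pos ⟨hc, hf⟩]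
      have hcf : l.count false = l.length + 2 - k := by
        have h1 := count_add l
        have h2 : l.count true ≤ l.length := List.count_le_length
        omega
      have hcf2 : (true :: l).count false = l.count false := by simp
      rw [hcf2, hcf]
      have he : l.length + 2 - k + (l.length + 2 - k + invStat l) - pairedStat l
          = 2 * (l.length + 2 - k) + (invStat l - pairedStat l) := by
        have := p_le_inv l; omega
      rw [he, pow_add, mul_assoc]
    · rw [if_neg (by tauto), if_neg (by tauto)]
      simp
  · rw [if_neg (by rw [hcc]; rintro ⟨h1, -⟩; omega), if_neg (by tauto)]
    simp

lemma wgt_tt_one (q : ℤ) (l : List Bool) : wgt q 1 (true :: true :: l) = 0 := by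
  unfold wgt
  rw [if_neg]
  rintro ⟨h1, -⟩
  simp at h1


def S (q : ℤ) (n k : ℕ) : ℤ := ∑ w : Fin n → Bool, wgt q k (List.ofFn w)

lemma sum_split (f : List Bool → ℤ) (n : ℕ) :
    ∑ w : Fin (n + 1) → Bool, f (List.ofFn w)
      = (∑ w : Fin n → Bool, f (true :: List.ofFn w))
        + ∑ w : Fin n → Bool, f (false :: List.ofFn w) := by
  rw [← (Fin.consEquiv (fun _ : Fin (n+1) => Bool)).sum_comp fun w => f (List.ofFn w)]
  rw [Fintype.sum_prod_type, Fintype.sum_bool]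
  simp [List.ofFn_succ, Fin.consEquiv]

lemma S_zero_right (q : ℤ) (n : ℕ) : S q n 0 = 1 := by
  induction n with
  | zero =>
    rw [S, Fintype.sum_eq_single (fun _ => true) (by intro x hx; exact absurd (funext fun i => i.elim0) hx)]
    simp [wgt, paired01free, invStat, pairedStat]
  | succ n ih =>
    rw [S, sum_split]
    have h1 : ∀ w : Fin n → Bool, wgt q 0 (true :: List.ofFn w) = 0 :=
      fun w => wgt_true_zero q _
    have h2 : ∀ w : Fin n → Bool, wgt q 0 (false :: List.ofFn w) = wgt q 0 (List.ofFn w) :=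
      fun w => wgt_false_even q 0 rfl _
    simp only [h1, h2, Finset.sum_const_zero, zero_add]
    exact ih

lemma S_eq_zero (q : ℤ) (n k : ℕ) (h : n < k) : S q n k = 0 := by
  rw [S]
  apply Finset.sum_eq_zero
  intro w _
  rw [wgt, if_neg]
  rintro ⟨h1, -⟩
  have h2 : (List.ofFn w).count true ≤ (List.ofFn w).length := List.count_le_length
  rw [List.length_ofFn] at h2
  omega

lemma S_succ_even (q : ℤ) (n k : ℕ) (hk : k % 2 = 0) (hk1 : 1 ≤ k) :
    S q (n + 1) k = q ^ (n + 1 - k) * S q n (k - 1) + S q n k := by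
  rw [S, sum_split, S, S, Finset.mul_sum]
  congr 1
  · apply Finset.sum_congr rfl
    intro w _
    rw [wgt_true_even q k hk hk1, List.length_ofFn]
  · apply Finset.sum_congr rfl
    intro w _
    exact wgt_false_even q k hk _

lemma S_two_odd (q : ℤ) (n k : ℕ) (hk : k % 2 = 1) (hk2 : 2 ≤ k) :
    S q (n + 2) k = q ^ (2 * (n + 2 - k)) * S q n (k - 2)
      + q ^ (n + 1 - k) * (q - 1) * S q n (k - 1) + S q n k := by
  rw [S, sum_split]
  rw [sum_split (fun l => wgt q k (true :: l)) n, sum_split (fun l => wgt q k (false :: l)) n]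
  have e1 : ∀ w : Fin n → Bool, wgt q k (true :: true :: List.ofFn w)
      = q ^ (2 * (n + 2 - k)) * wgt q (k - 2) (List.ofFn w) := by
    intro w; rw [wgt_tt_odd q k hk hk2, List.length_ofFn]
  have e2 : ∀ w : Fin n → Bool, wgt q k (true :: false :: List.ofFn w)
      = q ^ (n + 1 - k) * (q - 1) * wgt q (k - 1) (List.ofFn w) := by
    intro w; rw [wgt_tf_odd q k hk, List.length_ofFn]
  have e3 : ∀ w : Fin n → Bool, wgt q k (false :: true :: List.ofFn w) = 0 := by
    intro w; rw [wgt_ft_odd q k hk]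
  have e4 : ∀ w : Fin n → Bool, wgt q k (false :: false :: List.ofFn w)
      = wgt q k (List.ofFn w) := by
    intro w; rw [wgt_ff_odd q k hk]
  simp only [e1, e2, e3, e4, Finset.sum_const_zero, zero_add]
  rw [S, S, S, Finset.mul_sum, Finset.mul_sum]

lemma S_two_one (q : ℤ) (n : ℕ) :
    S q (n + 2) 1 = q ^ n * (q - 1) * S q n 0 + S q n 1 := by
  rw [S, sum_split]
  rw [sum_split (fun l => wgt q 1 (true :: l)) n, sum_split (fun l => wgt q 1 (false :: l)) n]
  have e1 : ∀ w : Fin n → Bool, wgt q 1 (true :: true :: List.ofFn w) = 0 :=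
    fun w => wgt_tt_one q _
  have e2 : ∀ w : Fin n → Bool, wgt q 1 (true :: false :: List.ofFn w)
      = q ^ n * (q - 1) * wgt q 0 (List.ofFn w) := by
    intro w; rw [wgt_tf_odd q 1 rfl, List.length_ofFn]; norm_num
  have e3 : ∀ w : Fin n → Bool, wgt q 1 (false :: true :: List.ofFn w) = 0 :=
    fun w => wgt_ft_odd q 1 rfl _
  have e4 : ∀ w : Fin n → Bool, wgt q 1 (false :: false :: List.ofFn w)
      = wgt q 1 (List.ofFn w) := fun w => wgt_ff_odd q 1 rfl _
  simp only [e1, e2, e3, e4, Finset.sum_const_zero, zero_add]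
  rw [S, S, Finset.mul_sum]


lemma gauss_rec (q : ℤ) (n k : ℕ) :
    gaussBinom q (n + 1) (k + 1) = gaussBinom q n (k + 1) + q ^ (n - k) * gaussBinom q n k := by
  rw [gaussBinom]

lemma gauss_zero (q : ℤ) (n : ℕ) : gaussBinom q n 0 = 1 := by
  cases n <;> rfl

lemma gauss_eq_zero (q : ℤ) : ∀ n k, n < k → gaussBinom q n k = 0 := by
  intro n
  induction n with
  | zero =>
    intro k hk
    match k, hk with
    | k + 1, _ => rfl
  | succ n ihn =>
    intro k hk
    match k, hk with
    | k + 1, hk =>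
      rw [gauss_rec, ihn (k + 1) (by omega), ihn k (by omega)]
      ring

lemma neg_one_pow_even (a : ℕ) (h : a % 2 = 0) : ((-1 : ℤ)) ^ a = 1 :=
  (Nat.even_iff.mpr h).neg_one_pow

lemma neg_one_pow_congr (a b : ℕ) (h : a % 2 = b % 2) : ((-1 : ℤ)) ^ a = (-1) ^ b := by
  rcases Nat.even_or_odd a with ha | ha
  · have hb : Even b := Nat.even_iff.mpr (by rw [← h]; exact Nat.even_iff.mp ha)
    rw [ha.neg_one_pow, hb.neg_one_pow]
  · have hb : Odd b := Nat.odd_iff.mpr (by rw [← h]; exact Nat.odd_iff.mp ha)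
    rw [ha.neg_one_pow, hb.neg_one_pow]

lemma flip (e : ℕ) (x y : ℤ) (h : (-1) ^ e * x = y) : x = (-1) ^ e * y := by
  rw [← h, ← mul_assoc, ← pow_add, neg_one_pow_even _ (by omega), one_mul]

lemma mul_mod_left1 (a b : ℕ) (h : a % 2 = 1) : (a * b) % 2 = b % 2 := by
  rw [Nat.mul_mod, h, one_mul]
  omega

lemma mul_mod_left0 (a b : ℕ) (h : a % 2 = 0) : (a * b) % 2 = 0 := by
  rw [Nat.mul_mod, h, zero_mul]
  rfl

lemma main (q : ℤ) : ∀ n k, (-1 : ℤ) ^ (k * (n - k)) * gaussBinom (-q) n k = S q n k := by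
  intro n
  induction n using Nat.strong_induction_on with
  | _ n ih =>
    intro k
    match n, ih with
    | 0, _ =>
      match k with
      | 0 => simpa [gauss_zero] using (S_zero_right q 0).symm
      | k + 1 =>
        rw [gauss_eq_zero _ _ _ (by omega), S_eq_zero q _ _ (by omega), mul_zero]
    | 1, ih =>
      match k with
      | 0 => simpa [gauss_zero] using (S_zero_right q 1).symm
      | 1 =>
        have hs : S q 1 1 = 1 := by
          rw [S, sum_split]
          rw [Fintype.sum_eq_single (fun _ => true)
            (fun b hb => absurd (funext fun i => i.elim0) hb)]
          rw [Fintype.sum_eq_single (fun _ => true)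
            (fun b hb => absurd (funext fun i => i.elim0) hb)]
          simp [wgt, paired01free, invStat, pairedStat]
        rw [hs]
        simp [gaussBinom]
      | k + 2 =>
        rw [gauss_eq_zero _ _ _ (by omega), S_eq_zero q _ _ (by omega), mul_zero]
    | (m + 2), ih =>
      rcases Nat.lt_or_ge (m + 2) k with hgt | hle
      · rw [gauss_eq_zero _ _ _ hgt, S_eq_zero q _ _ hgt, mul_zero]
      · rcases Nat.even_or_odd k with hke | hko
        · -- k even
          by_cases hk0 : k = 0
          · subst hk0
            simpa [gauss_zero] using (S_zero_right q (m + 2)).symm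
          · have hke' : k % 2 = 0 := Nat.even_iff.mp hke
            obtain ⟨j, rfl⟩ : ∃ j, k = j + 2 := ⟨k - 2, by omega⟩
            have hk2 : (j + 2) % 2 = 0 := Nat.even_iff.mp hke
            have hj1 : (j + 1) % 2 = 1 := by omega
            have hjm : j ≤ m := by omega
            -- recurrences
            have hS : S q (m + 2) (j + 2)
                = q ^ (m - j) * S q (m + 1) (j + 1) + S q (m + 1) (j + 2) := by
              have := S_succ_even q (m + 1) (j + 2) hk2 (by omega)
              rwa [show m + 1 + 1 - (j + 2) = m - j from by omega] at this
            have g1 : gaussBinom (-q) (m + 2) (j + 2)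
                = gaussBinom (-q) (m + 1) (j + 2)
                  + (-q) ^ (m - j) * gaussBinom (-q) (m + 1) (j + 1) := by
              have := gauss_rec (-q) (m + 1) (j + 1)
              rwa [show m + 1 - (j + 1) = m - j from by omega] at this
            have ihA : gaussBinom (-q) (m + 1) (j + 2) = S q (m + 1) (j + 2) := by
              have h := ih (m + 1) (by omega) (j + 2)
              rwa [neg_one_pow_even _ (mul_mod_left0 _ _ hk2), one_mul] at h
            have ihB : gaussBinom (-q) (m + 1) (j + 1)
                = (-1) ^ (m - j) * S q (m + 1) (j + 1) := by
              have h := ih (m + 1) (by omega) (j + 1)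
              rw [neg_one_pow_congr ((j + 1) * (m + 1 - (j + 1))) (m - j)
                (by rw [mul_mod_left1 _ _ hj1]; omega)] at h
              exact flip _ _ _ h
            have sg : ((-1 : ℤ)) ^ ((j + 2) * (m + 2 - (j + 2))) = 1 :=
              neg_one_pow_even _ (mul_mod_left0 _ _ hk2)
            rw [sg, one_mul, hS, g1, ihA, ihB]
            rcases Nat.even_or_odd (m - j) with hp | hp
            · rw [hp.neg_one_pow, hp.neg_pow]; ring
            · rw [hp.neg_one_pow, hp.neg_pow]; ring
        · -- k odd
          by_cases hk1 : k = 1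
          · subst hk1
            have hS := S_two_one q m
            rcases Nat.eq_zero_or_pos m with hm0 | hm1
            · subst hm0
              rw [hS, S_zero_right, S_eq_zero q 0 1 (by omega)]
              simp [gaussBinom]
              ring
            · have g1 : gaussBinom (-q) (m + 2) 1
                  = gaussBinom (-q) m 1 + (-q) ^ m + (-q) ^ (m + 1) := by
                have h1 := gauss_rec (-q) (m + 1) 0
                have h2 := gauss_rec (-q) m 0
                rw [h2, gauss_zero, gauss_zero] at h1
                rw [h1]
                simp
              have ihA : gaussBinom (-q) m 1 = (-1) ^ (m + 1) * S q m 1 := by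
                have h := ih m (by omega) 1
                rw [neg_one_pow_congr (1 * (m - 1)) (m + 1) (by rw [one_mul]; omega)] at h
                exact flip _ _ _ h
              have sg : ((-1 : ℤ)) ^ (1 * (m + 2 - 1)) = (-1) ^ (m + 1) :=
                neg_one_pow_congr _ _ (by rw [one_mul]; omega)
              rw [sg, hS, S_zero_right, g1, ihA]
              rcases Nat.even_or_odd m with hp | hp
              · rw [hp.add_one.neg_one_pow, hp.neg_pow, hp.add_one.neg_pow]; ring
              · rw [hp.add_one.neg_one_pow, hp.neg_pow, hp.add_one.neg_pow]; ring
          · have hko' : k % 2 = 1 := Nat.odd_iff.mp hko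
            obtain ⟨j, rfl⟩ : ∃ j, k = j + 2 := ⟨k - 2, by omega⟩
            have hk2 : (j + 2) % 2 = 1 := Nat.odd_iff.mp hko
            have hj : j % 2 = 1 := by omega
            have hj1 : (j + 1) % 2 = 0 := by omega
            have hjm : j ≤ m := by omega
            have hS : S q (m + 2) (j + 2)
                = q ^ (2 * (m - j)) * S q m j
                  + q ^ (m - j - 1) * (q - 1) * S q m (j + 1) + S q m (j + 2) := by
              have := S_two_odd q m (j + 2) hk2 (by omega)
              rwa [show 2 * (m + 2 - (j + 2)) = 2 * (m - j) from by omega,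
                show m + 1 - (j + 2) = m - j - 1 from by omega] at this
            have g1 : gaussBinom (-q) (m + 2) (j + 2)
                = gaussBinom (-q) (m + 1) (j + 2)
                  + (-q) ^ (m - j) * gaussBinom (-q) (m + 1) (j + 1) := by
              have := gauss_rec (-q) (m + 1) (j + 1)
              rwa [show m + 1 - (j + 1) = m - j from by omega] at this
            have g2 : gaussBinom (-q) (m + 1) (j + 2)
                = gaussBinom (-q) m (j + 2)
                  + (-q) ^ (m - j - 1) * gaussBinom (-q) m (j + 1) := by
              have := gauss_rec (-q) m (j + 1)
              rwa [show m - (j + 1) = m - j - 1 from by omega] at this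
            have g3 : gaussBinom (-q) (m + 1) (j + 1)
                = gaussBinom (-q) m (j + 1) + (-q) ^ (m - j) * gaussBinom (-q) m j :=
              gauss_rec (-q) m j
            have ihA : gaussBinom (-q) m (j + 2) = (-1) ^ (m - j) * S q m (j + 2) := by
              rcases Nat.lt_or_ge m (j + 2) with hlt | hge
              · rw [gauss_eq_zero _ _ _ hlt, S_eq_zero q _ _ hlt, mul_zero]
              · have h := ih m (by omega) (j + 2)
                rw [neg_one_pow_congr ((j + 2) * (m - (j + 2))) (m - j)
                  (by rw [mul_mod_left1 _ _ hk2]; omega)] at h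
                exact flip _ _ _ h
            have ihB : gaussBinom (-q) m (j + 1) = S q m (j + 1) := by
              have h := ih m (by omega) (j + 1)
              rwa [neg_one_pow_even _ (mul_mod_left0 _ _ hj1), one_mul] at h
            have ihC : gaussBinom (-q) m j = (-1) ^ (m - j) * S q m j := by
              have h := ih m (by omega) j
              rw [neg_one_pow_congr (j * (m - j)) (m - j)
                (mul_mod_left1 _ _ hj)] at h
              exact flip _ _ _ h
            have sg : ((-1 : ℤ)) ^ ((j + 2) * (m + 2 - (j + 2))) = (-1) ^ (m - j) := by
              rw [neg_one_pow_congr _ (m - j) (by rw [mul_mod_left1 _ _ hk2]; omega)]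
            rw [sg, hS, g1, g2, g3, ihA, ihB, ihC]
            rcases Nat.eq_or_lt_of_le hjm with heq | hlt
            · subst heq
              rw [S_eq_zero q j (j + 1) (by omega), S_eq_zero q j (j + 2) (by omega)]
              simp
            · obtain ⟨e, he⟩ : ∃ e, m - j = e + 1 := ⟨m - j - 1, by omega⟩
              rw [he, Nat.add_sub_cancel]
              rcases Nat.even_or_odd e with hp | hp
              · rw [hp.add_one.neg_one_pow, hp.neg_pow, hp.add_one.neg_pow]; ring
              · rw [hp.add_one.neg_one_pow, hp.neg_pow, hp.add_one.neg_pow]; ring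


lemma sum_eq_S (q : ℤ) (n k : ℕ) :
    (∑ w ∈ Finset.univ.filter
        (fun w : Fin n → Bool =>
          (List.ofFn w).count true = k ∧ paired01free (List.ofFn w) = true),
      q ^ (invStat (List.ofFn w) - pairedStat (List.ofFn w)) *
        (q - 1) ^ pairedStat (List.ofFn w)) = S q n k := by
  rw [S, Finset.sum_filter]
  apply Finset.sum_congr rfl
  intro w _
  rw [wgt]

end Aux

/-- Theorem 1 (main theorem): for every integer q,
`(-1)^(k(n-k)) [n choose k]_{-q} = ∑_{ω ∈ Ω'_{n,k}} q^{a(ω)} (q-1)^{p(ω)}`,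
where Ω'_{n,k} consists of binary words of length n with k ones and no paired (0,1),
p(ω) counts paired (1,0)'s, and a(ω) = inv(ω) - p(ω). -/
theorem stmt_3 (n k : ℕ) (hk : k ≤ n) (q : ℤ) :
    (-1 : ℤ) ^ (k * (n - k)) * gaussBinom (-q) n k =
      ∑ w ∈ Finset.univ.filter
          (fun w : Fin n → Bool =>
            (List.ofFn w).count true = k ∧ paired01free (List.ofFn w) = true),
        q ^ (invStat (List.ofFn w) - pairedStat (List.ofFn w)) *
          (q - 1) ^ pairedStat (List.ofFn w) := by
  rw [Aux.sum_eq_S]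
  exact Aux.main q n k
end

section
/- With the pairing algorithm and notation above, the Gaussian binomial coefficient admits the positive expansion [n choose k]_q = ∑_{ω ∈ Ω'_{n,k}} q^{a(ω)}·(q+1)^{p(ω)}. -/
lemma count_add (l : List Bool) : l.count false + l.count true = l.length := by
  induction l with
  | nil => rfl
  | cons a l ih => cases a <;> simp [List.count_cons] <;> omega

lemma count_true_cons_true (l : List Bool) : (true :: l).count true = l.count true + 1 := by
  simp [List.count_cons]

lemma count_true_cons_false (l : List Bool) : (false :: l).count true = l.count true := by
  simp [List.count_cons]

lemma count_false_cons_false (l : List Bool) : (false :: l).count false = l.count false + 1 := by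
  simp [List.count_cons]

lemma count_false_cons_true (l : List Bool) : (true :: l).count false = l.count false := by
  simp [List.count_cons]

lemma invStat_cons_true (l : List Bool) : invStat (true :: l) = l.count false + invStat l := by
  rw [invStat, if_pos rfl]

lemma invStat_cons_false (l : List Bool) : invStat (false :: l) = invStat l := by
  rw [invStat, if_neg (by simp), zero_add]

lemma paired_le_inv : ∀ l : List Bool, pairedStat l ≤ invStat l
  | [] => le_refl _
  | [a] => by simp [pairedStat, invStat]
  | a :: b :: rest => by
    have h1 := paired_le_inv rest
    have h2 := paired_le_inv (b :: rest)
    rw [pairedStat]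
    split
    · rcases a <;> rcases b <;>
        simp only [invStat_cons_true, invStat_cons_false,
          count_false_cons_false, count_false_cons_true] <;>
        simp <;> omega
    · rcases a
      · rw [invStat_cons_false]; exact h2
      · rw [invStat_cons_true]; exact h2.trans (Nat.le_add_left _ _)

def Fsum : ℕ → (List Bool → ℤ) → ℤ
  | 0, f => f []
  | n+1, f => Fsum n (fun l => f (true :: l)) + Fsum n (fun l => f (false :: l))

lemma Fsum_succ (n : ℕ) (f : List Bool → ℤ) :
    Fsum (n+1) f = Fsum n (fun l => f (true :: l)) + Fsum n (fun l => f (false :: l)) := rfl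

lemma Fsum_congr : ∀ (n : ℕ) (f g : List Bool → ℤ),
    (∀ l, l.length = n → f l = g l) → Fsum n f = Fsum n g
  | 0, f, g, h => h [] rfl
  | n+1, f, g, h => by
    rw [Fsum_succ, Fsum_succ,
      Fsum_congr n _ (fun l => g (true::l)) (fun l hl => h (true::l) (by simp [hl])),
      Fsum_congr n (fun l => f (false::l)) (fun l => g (false::l))
        (fun l hl => h (false::l) (by simp [hl]))]

lemma Fsum_zero (n : ℕ) : Fsum n (fun _ => 0) = 0 := by
  induction n with
  | zero => rfl
  | succ n ih => rw [Fsum_succ]; simp only [ih]; ring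

lemma Fsum_smul (n : ℕ) (c : ℤ) (f : List Bool → ℤ) :
    Fsum n (fun l => c * f l) = c * Fsum n f := by
  induction n generalizing f with
  | zero => rfl
  | succ n ih =>
    rw [Fsum_succ, Fsum_succ, ih, ih, mul_add]

lemma ofFn_cons (n : ℕ) (a : Bool) (w : Fin n → Bool) :
    List.ofFn (Fin.cons a w) = a :: List.ofFn w := by
  simp [List.ofFn_succ]

lemma sum_ofFn (n : ℕ) (f : List Bool → ℤ) :
    ∑ w : Fin n → Bool, f (List.ofFn w) = Fsum n f := by
  induction n generalizing f with
  | zero => simp [Fsum, List.ofFn_zero]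
  | succ n ih =>
    rw [Fsum_succ, ← ih, ← ih]
    rw [← Equiv.sum_comp (Fin.consEquiv (fun _ : Fin (n+1) => Bool))
      (fun w => f (List.ofFn w))]
    rw [Fintype.sum_prod_type, Fintype.sum_bool]
    congr 1
    · apply Finset.sum_congr rfl
      intro w _
      congr 1
      exact ofFn_cons n true w
    · apply Finset.sum_congr rfl
      intro w _
      congr 1
      exact ofFn_cons n false w

def g (q : ℤ) (k : ℕ) (l : List Bool) : ℤ :=
  if l.count true = k ∧ paired01free l = true then
    q ^ (invStat l - pairedStat l) * (q + 1) ^ pairedStat l else 0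

def S (q : ℤ) (n k : ℕ) : ℤ := Fsum n (g q k)

lemma gauss_zero (q : ℤ) : ∀ n k, n < k → gaussBinom q n k = 0
  | n, 0, h => absurd h (by omega)
  | 0, k+1, _ => by rw [gaussBinom]
  | n+1, k+1, h => by
    rw [gaussBinom, gauss_zero q n (k+1) (by omega), gauss_zero q n k (by omega)]
    ring

lemma g_zero_of_long (q : ℤ) (k : ℕ) (l : List Bool) (h : l.length < k) : g q k l = 0 := by
  rw [g, if_neg]
  rintro ⟨hc, -⟩
  exact absurd (hc ▸ (List.count_le_length : l.count true ≤ l.length)) (by omega)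

lemma S_zero (q : ℤ) (n k : ℕ) (h : n < k) : S q n k = 0 := by
  rw [S, Fsum_congr n _ (fun _ => 0) (fun l hl => g_zero_of_long q k l (by omega)), Fsum_zero]

-- pointwise lemmas, even k
lemma g_cons_false (q : ℤ) (k : ℕ) (hk : k % 2 = 0) (l : List Bool) :
    g q k (false :: l) = g q k l := by
  by_cases h : l.count true = k
  · match l with
    | [] =>
      have : k = 0 := by simpa using h.symm
      subst this
      simp [g, paired01free, invStat, pairedStat]
    | b :: rest =>
      have hc : (false :: b :: rest).count true = k := by rw [count_true_cons_false]; exact h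
      have hpar : ¬ ((false :: b :: rest).count true % 2 = 1) := by omega
      rw [g, g, paired01free, if_neg hpar, pairedStat, if_neg hpar, invStat_cons_false, hc, h]
  · rw [g, g, if_neg, if_neg]
    · rintro ⟨hc, -⟩; exact h hc
    · rintro ⟨hc, -⟩; exact h (by rwa [count_true_cons_false] at hc)

lemma g_cons_true (q : ℤ) (j : ℕ) (hj : j % 2 = 1) (l : List Bool) :
    g q (j+1) (true :: l) = q ^ (l.length - j) * g q j l := by
  by_cases h : l.count true = j
  · match l with
    | [] => simp at h; omega
    | b :: rest =>
      have hc : (true :: b :: rest).count true = j + 1 := by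
        rw [count_true_cons_true, h]
      have hpar : ¬ ((true :: b :: rest).count true % 2 = 1) := by omega
      rw [g, g, paired01free, if_neg hpar, pairedStat, if_neg hpar, invStat_cons_true, hc, h]
      have hca := count_add (b :: rest)
      have hle := paired_le_inv (b :: rest)
      have hexp : (b :: rest).count false + invStat (b :: rest) - pairedStat (b :: rest)
          = ((b :: rest).length - j) + (invStat (b :: rest) - pairedStat (b :: rest)) := by
        omega
      rw [hexp]
      by_cases hp : paired01free (b :: rest) = true
      · simp [hp, pow_add]
        try ring
      · simp [hp]
  · have e1 : g q j l = 0 := by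
      rw [g, if_neg]; rintro ⟨hc, -⟩; exact h hc
    have e2 : g q (j+1) (true :: l) = 0 := by
      rw [g, if_neg]
      rintro ⟨hc, -⟩
      rw [count_true_cons_true] at hc
      exact h (by omega)
    rw [e1, e2, mul_zero]

-- pointwise lemmas, odd k
lemma g_FT (q : ℤ) (k : ℕ) (hk : k % 2 = 1) (l : List Bool) :
    g q k (false :: true :: l) = 0 := by
  rw [g, if_neg]
  rintro ⟨hc, hp⟩
  have hpar : (false :: true :: l).count true % 2 = 1 := by rw [hc]; exact hk
  rw [paired01free, if_pos hpar] at hp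
  simp at hp

lemma g_FF (q : ℤ) (k : ℕ) (hk : k % 2 = 1) (l : List Bool) :
    g q k (false :: false :: l) = g q k l := by
  by_cases h : l.count true = k
  · have hc : (false :: false :: l).count true = k := by
      rw [count_true_cons_false, count_true_cons_false]; exact h
    have hpar : (false :: false :: l).count true % 2 = 1 := by rw [hc]; exact hk
    rw [g, g, paired01free, if_pos hpar, pairedStat, if_pos hpar,
      invStat_cons_false, invStat_cons_false, hc, h]
    have : (if (false : Bool) = true ∧ (false : Bool) = false then 1 else 0) = 0 := by simp
    rw [this, zero_add]
    by_cases hp : paired01free l = true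
    · simp [hp]
    · simp [hp]
  · rw [g, g, if_neg, if_neg]
    · rintro ⟨hc, -⟩; exact h hc
    · rintro ⟨hc, -⟩
      exact h (by rwa [count_true_cons_false, count_true_cons_false] at hc)

lemma g_TF (q : ℤ) (k : ℕ) (hk : (k+1) % 2 = 1) (l : List Bool) :
    g q (k+1) (true :: false :: l) = q ^ (l.length - k) * ((q+1) * g q k l) := by
  by_cases h : l.count true = k
  · have hc : (true :: false :: l).count true = k + 1 := by
      rw [count_true_cons_true, count_true_cons_false, h]
    have hpar : (true :: false :: l).count true % 2 = 1 := by rw [hc]; exact hk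
    rw [g, g, paired01free, if_pos hpar, pairedStat, if_pos hpar,
      invStat_cons_true, invStat_cons_false, count_false_cons_false, hc, h]
    have hone : (if (true : Bool) = true ∧ (false : Bool) = false then 1 else 0) = 1 := by simp
    rw [hone]
    have hca := count_add l
    have hle := paired_le_inv l
    have hexp : l.count false + 1 + invStat l - (1 + pairedStat l)
        = (l.length - k) + (invStat l - pairedStat l) := by omega
    rw [hexp]
    by_cases hp : paired01free l = true
    · simp [hp, pow_add, pow_succ]
      try ring
    · simp [hp]
  · have e1 : g q k l = 0 := by
      rw [g, if_neg]; rintro ⟨hc, -⟩; exact h hc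
    have e2 : g q (k+1) (true :: false :: l) = 0 := by
      rw [g, if_neg]
      rintro ⟨hc, -⟩
      rw [count_true_cons_true, count_true_cons_false] at hc
      exact h (by omega)
    rw [e1, e2]
    ring

lemma g_TT_one (q : ℤ) (l : List Bool) :
    g q 1 (true :: true :: l) = 0 := by
  rw [g, if_neg]
  rintro ⟨hc, -⟩
  rw [count_true_cons_true, count_true_cons_true] at hc
  omega

lemma g_TT (q : ℤ) (j : ℕ) (hj : (j+2) % 2 = 1) (l : List Bool) :
    g q (j+2) (true :: true :: l) = q ^ (2 * (l.length - j)) * g q j l := by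
  by_cases h : l.count true = j
  · have hc : (true :: true :: l).count true = j + 2 := by
      rw [count_true_cons_true, count_true_cons_true, h]
    have hpar : (true :: true :: l).count true % 2 = 1 := by rw [hc]; exact hj
    rw [g, g, paired01free, if_pos hpar, pairedStat, if_pos hpar,
      invStat_cons_true, invStat_cons_true, count_false_cons_true, hc, h]
    have hzero : (if (true : Bool) = true ∧ (true : Bool) = false then 1 else 0) = 0 := by simp
    rw [hzero, zero_add]
    have hca := count_add l
    have hle := paired_le_inv l
    have hexp : l.count false + (l.count false + invStat l) - pairedStat l
        = 2 * (l.length - j) + (invStat l - pairedStat l) := by omega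
    rw [hexp]
    by_cases hp : paired01free l = true
    · simp [hp, pow_add]
      try ring
    · simp [hp]
  · have e1 : g q j l = 0 := by
      rw [g, if_neg]; rintro ⟨hc, -⟩; exact h hc
    have e2 : g q (j+2) (true :: true :: l) = 0 := by
      rw [g, if_neg]
      rintro ⟨hc, -⟩
      rw [count_true_cons_true, count_true_cons_true] at hc
      exact h (by omega)
    rw [e1, e2, mul_zero]

lemma g_nil (q : ℤ) (k : ℕ) : g q k [] = if k = 0 then 1 else 0 := by
  rcases k with _ | k <;> simp [g, paired01free, invStat, pairedStat]

lemma g_true_zero (q : ℤ) (l : List Bool) : g q 0 (true :: l) = 0 := by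
  rw [g, if_neg]
  rintro ⟨hc, -⟩
  rw [count_true_cons_true] at hc
  omega

lemma S_k_zero (q : ℤ) (n : ℕ) : S q n 0 = 1 := by
  induction n with
  | zero => simp [S, Fsum, g_nil]
  | succ n ih =>
    rw [S, Fsum_succ]
    have h1 : Fsum n (fun l => g q 0 (true :: l)) = 0 := by
      rw [Fsum_congr n _ (fun _ => 0) (fun l _ => g_true_zero q l), Fsum_zero]
    have h2 : Fsum n (fun l => g q 0 (false :: l)) = Fsum n (g q 0) := by
      exact Fsum_congr n _ _ (fun l _ => g_cons_false q 0 rfl l)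
    rw [h1, h2]
    simpa [S] using ih

lemma main (q : ℤ) : ∀ n k, S q n k = gaussBinom q n k := by
  intro n
  induction n using Nat.strong_induction_on with
  | _ n ih =>
    intro k
    rcases k with _ | k
    · rw [S_k_zero]; cases n <;> rfl
    rcases Nat.even_or_odd (k+1) with he | ho
    · -- k+1 even, so k odd
      have hkodd : k % 2 = 1 := by
        rcases he with ⟨m, hm⟩; omega
      rcases n with _ | m
      · rw [S_zero q 0 (k+1) (by omega), gauss_zero q 0 (k+1) (by omega)]
      · rw [S, Fsum_succ]
        have h1 : Fsum m (fun l => g q (k+1) (true :: l))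
            = Fsum m (fun l => q ^ (m - k) * g q k l) := by
          apply Fsum_congr
          intro l hl
          rw [g_cons_true q k hkodd l, hl]
        have h2 : Fsum m (fun l => g q (k+1) (false :: l)) = Fsum m (g q (k+1)) := by
          exact Fsum_congr m _ _ (fun l _ =>
            g_cons_false q (k+1) (by omega) l)
        rw [h1, h2, Fsum_smul]
        have hG : gaussBinom q (m+1) (k+1)
            = gaussBinom q m (k+1) + q ^ (m - k) * gaussBinom q m k := rfl
        rw [hG]
        have := ih m (by omega)
        rw [show Fsum m (g q k) = S q m k from rfl,
          show Fsum m (g q (k+1)) = S q m (k+1) from rfl, this k, this (k+1)]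
        ring
    · -- k+1 odd
      have hkpar : (k+1) % 2 = 1 := Nat.odd_iff.mp ho
      rcases n with _ | _ | m
      · rw [S_zero q 0 (k+1) (by omega), gauss_zero q 0 (k+1) (by omega)]
      · rcases k with _ | k
        · show S q 1 1 = gaussBinom q 1 1
          rw [S]
          show g q 1 [true] + g q 1 [false] = gaussBinom q 1 1
          have hG : gaussBinom q 1 1 = gaussBinom q 0 1 + q ^ 0 * gaussBinom q 0 0 := rfl
          rw [hG]
          simp [g, gaussBinom, paired01free, invStat, pairedStat, List.count_cons]
        · rw [S_zero q 1 (k+2) (by omega), gauss_zero q 1 (k+2) (by omega)]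
      · -- n = m + 2
        rw [S, Fsum_succ, Fsum_succ, Fsum_succ]
        have hTF : Fsum m (fun l => g q (k+1) (true :: false :: l))
            = q ^ (m - k) * ((q+1) * S q m k) := by
          rw [Fsum_congr m _ (fun l => q ^ (m-k) * ((q+1) * g q k l))
              (fun l hl => by rw [g_TF q k hkpar l, hl]),
            Fsum_smul, Fsum_smul, S]
        have hFT : Fsum m (fun l => g q (k+1) (false :: true :: l)) = 0 := by
          rw [Fsum_congr m _ (fun _ => 0) (fun l _ => g_FT q (k+1) hkpar l), Fsum_zero]
        have hFF : Fsum m (fun l => g q (k+1) (false :: false :: l)) = S q m (k+1) := by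
          exact Fsum_congr m _ _ (fun l _ => g_FF q (k+1) hkpar l)
        rw [hTF, hFT, hFF]
        have ihm := ih m (by omega)
        rcases k with _ | j
        · -- k+1 = 1
          have hTT : Fsum m (fun l => g q 1 (true :: true :: l)) = 0 := by
            rw [Fsum_congr m _ (fun _ => 0) (fun l _ => g_TT_one q l), Fsum_zero]
          rw [hTT]
          simp only [ihm]
          have hG2 : gaussBinom q (m+2) 1
              = gaussBinom q (m+1) 1 + q ^ (m+1) * gaussBinom q (m+1) 0 := rfl
          have hG1 : gaussBinom q (m+1) 1
              = gaussBinom q m 1 + q ^ m * gaussBinom q m 0 := rfl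
          have hG0 : ∀ r, gaussBinom q r 0 = 1 := fun r => by cases r <;> rfl
          rw [hG2, hG1, hG0, hG0]
          simp only [Nat.sub_zero]
          rw [pow_succ]
          ring
        · -- k+1 = j+2
          have hTT : Fsum m (fun l => g q (j+2) (true :: true :: l))
              = q ^ (2 * (m - j)) * S q m j := by
            rw [Fsum_congr m _ (fun l => q ^ (2*(m-j)) * g q j l)
                (fun l hl => by rw [g_TT q j hkpar l, hl]), Fsum_smul]
            rfl
          rw [hTT]
          simp only [ihm]
          have hG2 : gaussBinom q (m+2) (j+2)
              = gaussBinom q (m+1) (j+2) + q ^ (m+1-(j+1)) * gaussBinom q (m+1) (j+1) := rfl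
          have hG1 : gaussBinom q (m+1) (j+2)
              = gaussBinom q m (j+2) + q ^ (m-(j+1)) * gaussBinom q m (j+1) := rfl
          have hG0 : gaussBinom q (m+1) (j+1)
              = gaussBinom q m (j+1) + q ^ (m-j) * gaussBinom q m j := rfl
          rw [hG2, hG1, hG0]
          by_cases hjm : j + 1 ≤ m
          · have e1 : m + 1 - (j+1) = m - j := by omega
            have e2 : 2 * (m - j) = (m - j) + (m - j) := by ring
            have e3 : m - j = (m - (j+1)) + 1 := by omega
            rw [e1, e2, e3, pow_add, pow_add, pow_succ]
            ring
          · have z1 : gaussBinom q m (j+1) = 0 := gauss_zero q m (j+1) (by omega)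
            have z2 : gaussBinom q m (j+2) = 0 := gauss_zero q m (j+2) (by omega)
            have e1 : m + 1 - (j+1) = m - j := by omega
            rw [z1, z2, e1, two_mul, pow_add]
            ring

/-- Corollary: the Gaussian binomial admits the positive expansion
`[n choose k]_q = ∑_{ω ∈ Ω'_{n,k}} q^{a(ω)} (q+1)^{p(ω)}`. -/
theorem stmt_4 (n k : ℕ) (hk : k ≤ n) (q : ℤ) :
    gaussBinom q n k =
      ∑ w ∈ Finset.univ.filter
          (fun w : Fin n → Bool =>
            (List.ofFn w).count true = k ∧ paired01free (List.ofFn w) = true),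
        q ^ (invStat (List.ofFn w) - pairedStat (List.ofFn w)) *
          (q + 1) ^ pairedStat (List.ofFn w) := by
  rw [← main q n k, S, ← sum_ofFn, Finset.sum_filter]
  apply Finset.sum_congr rfl
  intro w _
  rw [g]
end

section
/- For every word ω in Ω'_{n,k} (words of length n with k ones, no paired (0,1) under the recursive pairing), the number of inversions inv(ω) is congruent to k(n-k) modulo 2. -/
theorem key : ∀ L : List Bool, paired01free L = true →
    invStat L % 2 = (L.count true * L.count false) % 2
  | [] => by intro _; rfl
  | [a] => by intro _; cases a <;> rfl
  | a :: b :: rest => by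
    intro h
    unfold paired01free at h
    by_cases hodd : (a :: b :: rest).count true % 2 = 1
    · rw [if_pos hodd] at h
      simp only [Bool.and_eq_true, Bool.not_eq_true'] at h
      have ih := key rest h.2
      have hf := h.1
      simp only [List.count_cons] at hodd
      cases a <;> cases b <;> simp_all [invStat, List.count_cons]
      · rw [show List.count true rest * (List.count false rest + 1 + 1)
            = List.count true rest * List.count false rest + 2 * List.count true rest by ring]
        generalize List.count true rest * List.count false rest = m
        omega
      · rw [show (List.count true rest + 1) * (List.count false rest + 1)
            = List.count true rest * List.count false rest + List.count true rest
              + List.count false rest + 1 by ring]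
        generalize List.count true rest * List.count false rest = m at ih ⊢
        omega
      · rw [show (List.count true rest + 1 + 1) * List.count false rest
            = List.count true rest * List.count false rest + 2 * List.count false rest by ring]
        generalize List.count true rest * List.count false rest = m at ih ⊢
        omega
    · rw [if_neg hodd] at h
      have ih := key (b :: rest) h
      have e1 : invStat (a :: b :: rest)
          = (if a then (b :: rest).count false else 0) + invStat (b :: rest) := rfl
      have e2 : (a :: b :: rest).count true
          = (b :: rest).count true + (if a then 1 else 0) := by
        cases a <;> simp [List.count_cons]
      have e3 : (a :: b :: rest).count false
          = (b :: rest).count false + (if a then 0 else 1) := by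
        cases a <;> simp [List.count_cons]
      rw [e2] at hodd
      rw [e1, e2, e3]
      set K := (b :: rest).count true
      set Z := (b :: rest).count false
      cases a <;> simp at hodd ⊢
      · rw [show K * (Z + 1) = K * Z + K by ring]
        generalize K * Z = m at ih ⊢
        omega
      · rw [show (K + 1) * Z = K * Z + Z by ring]
        generalize K * Z = m at ih ⊢
        omega
termination_by L => L.length

/-- For every word ω in Ω'_{n,k} (length n, k ones, no paired (0,1)),
inv(ω) ≡ k(n-k) (mod 2). -/
theorem stmt_5 (n k : ℕ) (L : List Bool) (hlen : L.length = n)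
    (hcount : L.count true = k) (hfree : paired01free L = true) :
    invStat L % 2 = k * (n - k) % 2 := by
  have hsum : L.count true + L.count false = L.length := by
    clear hcount hlen hfree
    induction L with
    | nil => rfl
    | cons a t ih => cases a <;> simp [List.count_cons] <;> omega
  have hk := key L hfree
  have hz : L.count false = n - k := by omega
  rw [hk, hcount, hz]
end

section
/- For any integer q and the (q,t)-binomial defined as the rational function [n choose k]_{q,t} = ∏_{i=1}^{k} (1 - t^{q^n - q^{i-1}})/(1 - t^{q^k - q^{i-1}}), one has the symmetry t^{k(q^n - q^k)}·[n choose k]_{q, t^{-1}} = [n choose k]_{q,t} as rational functions in t. -/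
open RatFunc in
/-- The (q,t)-binomial coefficient, as a rational function in `t`:
`[n choose k]_{q,t} = ∏_{i=1}^k (1 - t^(q^n - q^(i-1))) / (1 - t^(q^k - q^(i-1)))`,
where `t` is substituted by an arbitrary rational function. -/
noncomputable def qtBinom (q : ℤ) (n k : ℕ) (t : RatFunc ℚ) : RatFunc ℚ :=
  ∏ i ∈ Finset.range k, (1 - t ^ (q ^ n - q ^ i)) / (1 - t ^ (q ^ k - q ^ i))

private lemma aux_frac {F : Type*} [Field F] (x y : F) (hx : x ≠ 0) (hy : y ≠ 0) :
    (1 - x⁻¹) / (1 - y⁻¹) = (y * x⁻¹) * ((1 - x) / (1 - y)) := by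
  by_cases hy1 : y = 1
  · simp [hy1]
  have e1 : 1 - x⁻¹ = (x - 1) * x⁻¹ := by field_simp
  have e2 : 1 - y⁻¹ = (y - 1) * y⁻¹ := by field_simp
  have e3 : (1 - x) / (1 - y) = (x - 1) / (y - 1) := by
    rw [← neg_div_neg_eq, neg_sub, neg_sub]
  rw [e1, e2, mul_div_mul_comm, e3, div_eq_mul_inv x⁻¹, inv_inv]
  ring

private lemma prod_zpow {F : Type*} [Field F] (x : F) (hx : x ≠ 0)
    (s : Finset ℕ) (f : ℕ → ℤ) :
    ∏ i ∈ s, x ^ (f i) = x ^ (∑ i ∈ s, f i) := by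
  induction s using Finset.induction with
  | empty => simp
  | insert _ _ h ih => rw [Finset.prod_insert h, Finset.sum_insert h, zpow_add₀ hx, ih]

/-- Symmetry of the (q,t)-binomial:
`t^(k(q^n - q^k)) · [n choose k]_{q, t⁻¹} = [n choose k]_{q,t}`. -/
theorem stmt_6 (q : ℤ) (hq : 2 ≤ |q|) (n k : ℕ) (hk : k ≤ n) :
    RatFunc.X ^ ((k : ℤ) * (q ^ n - q ^ k)) * qtBinom q n k (RatFunc.X)⁻¹ =
      qtBinom q n k RatFunc.X := by
  have hX : (RatFunc.X : RatFunc ℚ) ≠ 0 := RatFunc.X_ne_zero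
  unfold qtBinom
  have step : ∀ i ∈ Finset.range k,
      (1 - (RatFunc.X : RatFunc ℚ)⁻¹ ^ (q ^ n - q ^ i)) /
        (1 - (RatFunc.X : RatFunc ℚ)⁻¹ ^ (q ^ k - q ^ i)) =
      RatFunc.X ^ ((q ^ k - q ^ i) - (q ^ n - q ^ i)) *
        ((1 - (RatFunc.X : RatFunc ℚ) ^ (q ^ n - q ^ i)) /
          (1 - RatFunc.X ^ (q ^ k - q ^ i))) := by
    intro i _
    rw [inv_zpow, inv_zpow,
      aux_frac (RatFunc.X ^ (q ^ n - q ^ i)) (RatFunc.X ^ (q ^ k - q ^ i))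
        (zpow_ne_zero _ hX) (zpow_ne_zero _ hX),
      zpow_sub₀ hX (q ^ k - q ^ i) (q ^ n - q ^ i), div_eq_mul_inv, div_eq_mul_inv]
  rw [Finset.prod_congr rfl step, Finset.prod_mul_distrib, prod_zpow _ hX, ← mul_assoc,
    ← zpow_add₀ hX]
  have : (k : ℤ) * (q ^ n - q ^ k) +
      ∑ i ∈ Finset.range k, ((q ^ k - q ^ i) - (q ^ n - q ^ i)) = 0 := by
    simp [Finset.sum_sub_distrib, mul_comm]
    ring
  rw [this, zpow_zero, one_mul]
end

section
/- Let q be a prime power, n odd, and γ a generator of the cyclic group F_{q^{2n}}^×. Then the element γ^{q^n - 1} has multiplicative order q^n + 1, and multiplication by γ^{q^n-1} on V = F_{q^{2n}} preserves the Hermitian form (α,β) = Tr_{F_{q^{2n}}/F_{q^{2m}}}(α·β^{q^n}) for every divisor m of n. -/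
/-- The F_{q^{2m}}-valued Hermitian form on V = F_{q^{2n}}:
`(α,β) = Tr_{F_{q^{2n}}/F_{q^{2m}}} (α · β^(q^n)) = ∑_{j=0}^{n/m - 1} (α β^(q^n))^(q^(2mj))`. -/
def herm (q n m : ℕ) {F : Type} [Field F] (α β : F) : F :=
  ∑ j ∈ Finset.range (n / m), (α * β ^ (q ^ n)) ^ (q ^ (2 * m * j))

/-- Let q be a prime power, n odd, F a field with q^(2n) elements, and γ a generator
of the cyclic group Fˣ.  Then γ^(q^n - 1) has multiplicative order q^n + 1, and
multiplication by γ^(q^n-1) preserves the Hermitian form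
`(α,β) = Tr_{F_{q^{2n}}/F_{q^{2m}}}(α β^(q^n))` for every positive divisor m of n. -/
theorem stmt_15 (q n : ℕ) (hq : IsPrimePow q) (hn : Odd n) (hn0 : 0 < n)
    (F : Type) [Field F] [Fintype F] (hF : Fintype.card F = q ^ (2 * n))
    (γ : Fˣ) (hγ : orderOf γ = q ^ (2 * n) - 1) :
    orderOf (γ ^ (q ^ n - 1)) = q ^ n + 1 ∧
      ∀ m : ℕ, 0 < m → m ∣ n → ∀ α β : F,
        herm q n m ((γ : F) ^ (q ^ n - 1) * α) ((γ : F) ^ (q ^ n - 1) * β) =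
          herm q n m α β := by
  have hq2 : 2 ≤ q := hq.two_le
  have ha : 2 ≤ q ^ n := by
    calc 2 ≤ q := hq2
    _ = q ^ 1 := (pow_one q).symm
    _ ≤ q ^ n := Nat.pow_le_pow_right (by omega) hn0
  have hfact : q ^ (2 * n) - 1 = (q ^ n - 1) * (q ^ n + 1) := by
    have h1 : 1 ≤ q ^ (2 * n) := Nat.one_le_pow _ _ (by omega)
    zify [show 1 ≤ q ^ n by omega, h1]
    rw [two_mul, pow_add]
    ring
  have hpow1 : (γ : F) ^ ((q ^ n - 1) * (q ^ n + 1)) = 1 := by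
    have : γ ^ ((q ^ n - 1) * (q ^ n + 1)) = 1 := by
      rw [← hfact, ← hγ, pow_orderOf_eq_one]
    have h := congrArg Units.val this
    simpa using h
  constructor
  · rw [orderOf_pow, hγ, hfact]
    have hg : Nat.gcd ((q ^ n - 1) * (q ^ n + 1)) (q ^ n - 1) = q ^ n - 1 :=
      Nat.gcd_eq_right ⟨q ^ n + 1, rfl⟩
    rw [hg, Nat.mul_div_cancel_left _ (by omega)]
  · intro m hm hmn α β
    unfold herm
    apply Finset.sum_congr rfl
    intro j _
    congr 1
    have : ((γ : F) ^ (q ^ n - 1) * α) * ((γ : F) ^ (q ^ n - 1) * β) ^ q ^ n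
        = (γ : F) ^ ((q ^ n - 1) * (q ^ n + 1)) * (α * β ^ q ^ n) := by
      ring
    rw [this, hpow1, one_mul]
end

section
/- Let q ≥ 2 be an integer and n odd, and let A ≥ 3 divide q^n + 1. Let m be the smallest positive integer d with A dividing q^{2d} - 1 (so A divides q^m + 1). Then for nonnegative integers s, t: A divides q^s + q^t if and only if s - t is an odd multiple of m, and A divides q^s - q^t if and only if s - t is a multiple of 2m. -/
/-- Let q ≥ 2, n odd, A ≥ 3 dividing q^n + 1, and let m be the smallest positive
integer d with A ∣ q^(2d) - 1.  Then for nonnegative integers s, t: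
A divides q^s + q^t iff s - t is an odd multiple of m, and
A divides q^s - q^t iff s - t is a multiple of 2m. -/
theorem stmt_17 (q n A m : ℕ) (hq : 2 ≤ q) (hn : Odd n) (hA : 3 ≤ A)
    (hdvd : A ∣ q ^ n + 1)
    (hm0 : 0 < m) (hm : A ∣ q ^ (2 * m) - 1)
    (hmin : ∀ d : ℕ, 0 < d → A ∣ q ^ (2 * d) - 1 → m ≤ d)
    (s t : ℕ) :
    ((A : ℤ) ∣ (q : ℤ) ^ s + (q : ℤ) ^ t ↔
        ∃ α : ℤ, Odd α ∧ (s : ℤ) - t = m * α) ∧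
      ((A : ℤ) ∣ (q : ℤ) ^ s - (q : ℤ) ^ t ↔
        ∃ α : ℤ, (s : ℤ) - t = 2 * m * α) := by
  haveI : NeZero A := ⟨by omega⟩
  haveI : Fact (2 < A) := ⟨by omega⟩
  set Q : ZMod A := (q : ZMod A) with hQdef
  have hn1 : 1 ≤ n := hn.pos
  have hQn : Q ^ n = -1 := by
    have : ((q ^ n + 1 : ℕ) : ZMod A) = 0 := (ZMod.natCast_eq_zero_iff _ _).2 hdvd
    push_cast at this
    linear_combination this
  have hne : (-1 : ZMod A) ≠ 1 := ZMod.neg_one_ne_one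
  have hQu : IsUnit Q := by
    refine IsUnit.of_mul_eq_one (a := Q) (-Q ^ (n - 1)) ?_
    have : Q * Q ^ (n - 1) = Q ^ n := by
      rw [← pow_succ']
      congr 1
      omega
    rw [mul_neg, this, hQn, neg_neg]
  set u : (ZMod A)ˣ := hQu.unit with hudef
  have huv : (u : ZMod A) = Q := hQu.unit_spec
  have hpowcast : ∀ k : ℕ, ((u ^ k : (ZMod A)ˣ) : ZMod A) = Q ^ k := by
    intro k; rw [Units.val_pow_eq_pow_val, huv]
  have hpow1 : ∀ k : ℕ, 0 < k → u ^ (2 * k) = 1 → A ∣ q ^ (2 * k) - 1 := by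
    intro k hk h
    have h1 : Q ^ (2 * k) = 1 := by rw [← hpowcast, h, Units.val_one]
    have hq1 : 1 ≤ q ^ (2 * k) := Nat.one_le_pow _ _ (by omega)
    have : ((q ^ (2 * k) - 1 : ℕ) : ZMod A) = 0 := by
      push_cast [hq1]
      rw [← hQdef, h1, sub_self]
    exact (ZMod.natCast_eq_zero_iff _ _).1 this
  have hun : u ^ n = -1 := by
    apply Units.ext
    rw [hpowcast, hQn, Units.val_neg, Units.val_one]
  have hu2m : u ^ (2 * m) = 1 := by
    apply Units.ext
    rw [hpowcast, Units.val_one]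
    have hq1 : 1 ≤ q ^ (2 * m) := Nat.one_le_pow _ _ (by omega)
    have : ((q ^ (2 * m) - 1 : ℕ) : ZMod A) = 0 := (ZMod.natCast_eq_zero_iff _ _).2 hm
    push_cast [hq1] at this
    rw [hQdef]
    linear_combination this
  have hordpos : 0 < orderOf u := orderOf_pos u
  have hord2m : orderOf u ∣ 2 * m := orderOf_dvd_of_pow_eq_one hu2m
  have hord2n : orderOf u ∣ 2 * n := by
    apply orderOf_dvd_of_pow_eq_one
    rw [two_mul, pow_add, hun, neg_mul_neg, one_mul]
  have hordeven : 2 ∣ orderOf u := by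
    by_contra h
    have hcop : Nat.Coprime (orderOf u) 2 :=
      ((Nat.prime_two.coprime_iff_not_dvd).2 h).symm
    have h1 : orderOf u ∣ n := Nat.Coprime.dvd_of_dvd_mul_left hcop hord2n
    have h2 : u ^ n = 1 := orderOf_dvd_iff_pow_eq_one.1 h1
    rw [hun] at h2
    have hval := congrArg Units.val h2
    simp only [Units.val_neg, Units.val_one] at hval
    exact hne hval
  obtain ⟨d, hd⟩ := hordeven
  have hdm : d ∣ m :=
    (mul_dvd_mul_iff_left (two_ne_zero)).1 (hd ▸ hord2m)
  have hdpos : 0 < d := by omega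
  have hmd : m ≤ d := hmin d hdpos (hpow1 d hdpos (by rw [← hd]; exact pow_orderOf_eq_one u))
  have hord : orderOf u = 2 * m := by
    have := Nat.le_of_dvd hm0 hdm
    omega
  have hmn : m ∣ n := by
    have h2 : 2 * m ∣ 2 * n := hord ▸ hord2n
    exact (mul_dvd_mul_iff_left (two_ne_zero)).1 h2
  obtain ⟨c, hc⟩ := hmn
  have hcodd : Odd c := (Nat.odd_mul.1 (hc ▸ hn)).2
  have hum : u ^ m = -1 := by
    obtain ⟨k, hk⟩ := hcodd
    have h1 : u ^ n = (u ^ m) ^ c := by rw [← pow_mul, ← hc]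
    rw [hun] at h1
    have h2 : (u ^ m) ^ c = ((u ^ m) ^ 2) ^ k * u ^ m := by
      rw [hk, pow_succ, pow_mul]
    have h3 : (u ^ m) ^ 2 = 1 := by rw [← pow_mul, mul_comm, hu2m]
    rw [h2, h3, one_pow, one_mul] at h1
    exact h1.symm
  have hz1 : ∀ k : ℤ, u ^ k = 1 ↔ (2 * (m : ℤ)) ∣ k := by
    intro k
    rw [← orderOf_dvd_iff_zpow_eq_one, hord]
    push_cast
    rfl
  have hzm : ∀ k : ℤ, u ^ k = -1 ↔ ∃ α : ℤ, Odd α ∧ k = m * α := by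
    intro k
    constructor
    · intro h
      have h1 : u ^ (k + m) = 1 := by
        rw [zpow_add, h, zpow_natCast, hum, neg_mul_neg, one_mul]
      obtain ⟨β, hβ⟩ := (hz1 _).1 h1
      refine ⟨2 * β - 1, ⟨β - 1, by ring⟩, by push_cast at hβ ⊢; linarith⟩
    · rintro ⟨α, ⟨β, hβ⟩, rfl⟩
      have h1 : u ^ (2 * (m : ℤ) * β) = 1 := (hz1 _).2 ⟨β, rfl⟩
      have h2 : (m : ℤ) * α = 2 * (m : ℤ) * β + m := by rw [hβ]; ring
      rw [h2, zpow_add, h1, one_mul, zpow_natCast, hum]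
  have hcancel : ∀ a b : ZMod A, a * Q ^ t = b * Q ^ t → a = b := by
    intro a b hab
    exact (hQu.pow t).mul_right_cancel hab
  have hsplit : Q ^ s = ((u ^ ((s : ℤ) - t) : (ZMod A)ˣ) : ZMod A) * Q ^ t := by
    have h1 : u ^ (s : ℤ) = u ^ ((s : ℤ) - t) * u ^ (t : ℤ) := by
      rw [← zpow_add]; congr 1; ring
    calc Q ^ s = ((u ^ ((s : ℤ)) : (ZMod A)ˣ) : ZMod A) := by
          rw [zpow_natCast, hpowcast]
      _ = ((u ^ ((s : ℤ) - t) : (ZMod A)ˣ) : ZMod A) * ((u ^ ((t : ℤ)) : (ZMod A)ˣ) : ZMod A) := by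
          rw [h1, Units.val_mul]
      _ = _ := by rw [zpow_natCast, hpowcast]
  constructor
  · rw [← ZMod.intCast_zmod_eq_zero_iff_dvd]
    push_cast
    rw [← hQdef, ← hzm]
    constructor
    · intro h
      apply Units.ext
      rw [Units.val_neg, Units.val_one]
      apply hcancel
      rw [neg_mul]
      linear_combination h - hsplit
    · intro h
      have hval := congrArg Units.val h
      rw [Units.val_neg, Units.val_one] at hval
      linear_combination hsplit + Q ^ t * hval
  · rw [← ZMod.intCast_zmod_eq_zero_iff_dvd]
    push_cast
    rw [← hQdef]
    have : (∃ α : ℤ, (s : ℤ) - t = 2 * (m : ℤ) * α) ↔ (2 * (m : ℤ)) ∣ ((s : ℤ) - t) := by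
      constructor
      · rintro ⟨α, hα⟩; exact ⟨α, hα⟩
      · rintro ⟨α, hα⟩; exact ⟨α, hα⟩
    rw [this, ← hz1]
    constructor
    · intro h
      apply Units.ext
      rw [Units.val_one]
      apply hcancel
      rw [one_mul]
      linear_combination h - hsplit
    · intro h
      have hval := congrArg Units.val h
      rw [Units.val_one] at hval
      linear_combination hsplit + Q ^ t * hval
end

section
/- Let q be a prime power, n, m, ℓ odd positive integers with ℓ | m and m | n. An F_{q^{2m}}-subspace W of F_{q^{2n}} is nondegenerate for the form (α,β)_{F_{q^{2m}}} = Tr_{F_{q^{2n}}/F_{q^{2m}}}(α β^{q^n}) if and only if W, regarded as an F_{q^{2ℓ}}-subspace, is nondegenerate for (α,β)_{F_{q^{2ℓ}}} = Tr_{F_{q^{2n}}/F_{q^{2ℓ}}}(α β^{q^n}). -/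
open Finset Polynomial

private lemma sum_range_mul_eq {M : Type*} [AddCommMonoid M] (a : ℕ) (f : ℕ → M) :
    ∀ b : ℕ, ∑ j ∈ Finset.range (a * b), f j
      = ∑ k ∈ Finset.range b, ∑ i ∈ Finset.range a, f (a * k + i)
  | 0 => by simp
  | (b + 1) => by
      rw [Nat.mul_succ, Finset.sum_range_add, sum_range_mul_eq a f b, Finset.sum_range_succ]

private lemma pow_q_cycle {F : Type} [Field F] {q e : ℕ} {c : F} (hc : c ^ q ^ e = c) :
    ∀ (s r : ℕ), c ^ q ^ (e * s + r) = c ^ q ^ r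
  | 0, r => by simp
  | (s + 1), r => by
      have h : e * (s + 1) + r = e + (e * s + r) := by ring
      rw [h, pow_add, pow_mul, hc, pow_q_cycle hc s r]

/-- Let q be a prime power, n, m, ℓ odd positive integers with ℓ ∣ m and m ∣ n, and
F a field with q^(2n) elements.  Let W be an F_{q^{2m}}-subspace of F = F_{q^{2n}}
(an additive subgroup closed under multiplication by elements of the subfield
F_{q^{2m}} = {c : c^(q^(2m)) = c}).  Then W is nondegenerate for the form
`(α,β)_{F_{q^{2m}}} = Tr_{F_{q^{2n}}/F_{q^{2m}}}(α β^(q^n))` if and only if W,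
regarded as an F_{q^{2ℓ}}-subspace, is nondegenerate for `(α,β)_{F_{q^{2ℓ}}}`. -/
theorem stmt_19 (q n m ℓ : ℕ) (hq : IsPrimePow q)
    (hn : Odd n) (hm : Odd m) (hℓ : Odd ℓ) (hn0 : 0 < n) (hm0 : 0 < m) (hℓ0 : 0 < ℓ)
    (hℓm : ℓ ∣ m) (hmn : m ∣ n)
    (F : Type) [Field F] [Fintype F] (hF : Fintype.card F = q ^ (2 * n))
    (W : AddSubgroup F)
    (hW : ∀ c : F, c ^ (q ^ (2 * m)) = c → ∀ w ∈ W, c * w ∈ W) :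
    (∀ α ∈ W, α ≠ 0 → ∃ β ∈ W, herm q n m α β ≠ 0) ↔
      (∀ α ∈ W, α ≠ 0 → ∃ β ∈ W, herm q n ℓ α β ≠ 0) := by
  classical
  have hq1 : 1 < q := hq.one_lt
  -- characteristic
  obtain ⟨p, s, hpp', hs0, hqs⟩ := hq
  have hpp : p.Prime := hpp'.nat_prime
  haveI : CharP F (ringChar F) := ringChar.charP F
  obtain ⟨d, hrp, hcard⟩ := FiniteField.card F (ringChar F)
  have hre : ringChar F ^ (d : ℕ) = p ^ (s * (2 * n)) := by
    rw [← hcard, hF, ← hqs, ← pow_mul]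
  have hrP : ringChar F = p := by
    have hdvd : ringChar F ∣ p ^ (s * (2 * n)) := hre ▸ dvd_pow_self _ d.ne_zero
    exact (Nat.prime_dvd_prime_iff_eq hrp hpp).mp (hrp.dvd_of_dvd_pow hdvd)
  haveI hcharp : CharP F p := hrP ▸ ringChar.charP F
  haveI : Fact p.Prime := ⟨hpp⟩
  have hfrob : ∀ (E : ℕ) (t : Finset ℕ) (g : ℕ → F),
      (∑ i ∈ t, g i) ^ q ^ E = ∑ i ∈ t, g i ^ q ^ E := by
    intro E t g
    have h : q ^ E = p ^ (s * E) := by rw [← hqs, pow_mul]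
    rw [h, sum_pow_char_pow]
  have hQ : ∀ x : F, x ^ q ^ (2 * n) = x := by
    intro x
    have h := FiniteField.pow_card x
    rwa [hF] at h
  have hml : ℓ * (m / ℓ) = m := Nat.mul_div_cancel' hℓm
  have hnm : m * (n / m) = n := Nat.mul_div_cancel' hmn
  have hk0 : 0 < m / ℓ := Nat.div_pos (Nat.le_of_dvd hm0 hℓm) hℓ0
  have ht0 : 0 < n / m := Nat.div_pos (Nat.le_of_dvd hn0 hmn) hm0
  have htodd : Odd (n / m) := by
    have h : Odd (m * (n / m)) := by rw [hnm]; exact hn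
    exact (Nat.odd_mul.mp h).2
  obtain ⟨u, hu⟩ := htodd
  have hn_eq : n = m * (2 * u + 1) := by rw [← hnm, hu]
  -- key identity: the ℓ-form is the relative trace of the m-form
  have hkey : ∀ α β : F, herm q n ℓ α β
      = ∑ i ∈ Finset.range (m / ℓ), (herm q n m α β) ^ q ^ (2 * ℓ * i) := by
    intro α β
    simp only [herm]
    have hnl : n / ℓ = (m / ℓ) * (n / m) := by
      have h : ℓ * ((m / ℓ) * (n / m)) = n := by rw [← mul_assoc, hml, hnm]
      conv_lhs => rw [← h]
      rw [Nat.mul_div_cancel_left _ hℓ0]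
    rw [hnl, sum_range_mul_eq, Finset.sum_comm]
    refine Finset.sum_congr rfl fun i _ => ?_
    rw [hfrob]
    refine Finset.sum_congr rfl fun k _ => ?_
    rw [← pow_mul, ← pow_add]
    congr 1
    have h : 2 * ℓ * ((m / ℓ) * k + i) = 2 * (ℓ * (m / ℓ)) * k + 2 * ℓ * i := by ring
    rw [h, hml]
  -- the m-form takes values in F_{q^{2m}}
  have hTfix : ∀ α β : F, (herm q n m α β) ^ q ^ (2 * m) = herm q n m α β := by
    intro α β
    simp only [herm]
    rw [hfrob]
    set g : ℕ → F := fun j => (α * β ^ q ^ n) ^ q ^ (2 * m * j) with hg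
    have hterm : ∀ j, ((α * β ^ q ^ n) ^ q ^ (2 * m * j)) ^ q ^ (2 * m) = g (j + 1) := by
      intro j
      have e : 2 * m * j + 2 * m = 2 * m * (j + 1) := by ring
      rw [hg, ← pow_mul, ← pow_add, e]
    have hgt : g (n / m) = g 0 := by
      have h2 : 2 * m * (n / m) = 2 * n := by rw [mul_assoc, hnm]
      simp only [hg, h2, mul_zero, pow_zero, pow_one]
      exact hQ _
    have h3 : (∑ j ∈ Finset.range (n / m), g (j + 1)) + g 0
        = (∑ j ∈ Finset.range (n / m), g j) + g 0 := by
      rw [← Finset.sum_range_succ' g, Finset.sum_range_succ, hgt]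
    calc ∑ j ∈ Finset.range (n / m), ((α * β ^ q ^ n) ^ q ^ (2 * m * j)) ^ q ^ (2 * m)
        = ∑ j ∈ Finset.range (n / m), g (j + 1) :=
          Finset.sum_congr rfl fun j _ => hterm j
      _ = ∑ j ∈ Finset.range (n / m), g j := add_right_cancel h3
  -- scaling by subfield elements
  have hscale : ∀ c : F, c ^ q ^ (2 * m) = c → ∀ α β : F,
      herm q n m α (c * β) = c ^ q ^ m * herm q n m α β := by
    intro c hc α β
    simp only [herm]
    rw [Finset.mul_sum]
    refine Finset.sum_congr rfl fun j _ => ?_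
    have h1 : α * (c * β) ^ q ^ n = c ^ q ^ n * (α * β ^ q ^ n) := by
      rw [mul_pow]; ring
    rw [h1, mul_pow]
    congr 1
    rw [← pow_mul, ← pow_add]
    have h2 : n + 2 * m * j = 2 * m * (u + j) + m := by rw [hn_eq]; ring
    rw [h2, pow_q_cycle hc (u + j) m]
  -- counting the subfield
  have hScard : q ^ (2 * m)
      ≤ (Finset.univ.filter (fun x : F => x ^ q ^ (2 * m) = x)).card := by
    have hq0 : 0 < q := by omega
    have hgroots : (X ^ q ^ (2 * n) - X : F[X]).roots = Finset.univ.val := by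
      have h := FiniteField.roots_X_pow_card_sub_X (K := F)
      rwa [hF] at h
    have hgne : (X ^ q ^ (2 * n) - X : F[X]) ≠ 0 :=
      FiniteField.X_pow_card_pow_sub_X_ne_zero F (by omega) hq1
    have hfne : (X ^ q ^ (2 * m) - X : F[X]) ≠ 0 :=
      FiniteField.X_pow_card_pow_sub_X_ne_zero F (by omega) hq1
    have hfdeg : (X ^ q ^ (2 * m) - X : F[X]).natDegree = q ^ (2 * m) :=
      FiniteField.X_pow_card_pow_sub_X_natDegree_eq F (by omega) hq1
    have hgdeg : (X ^ q ^ (2 * n) - X : F[X]).natDegree = q ^ (2 * n) :=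
      FiniteField.X_pow_card_pow_sub_X_natDegree_eq F (by omega) hq1
    have hdvd : (X ^ q ^ (2 * m) - X : F[X]) ∣ (X ^ q ^ (2 * n) - X : F[X]) := by
      have h1 : (q ^ (2 * m) - 1) ∣ (q ^ (2 * n) - 1) := by
        obtain ⟨t, ht⟩ := hmn
        have h2 : q ^ (2 * n) = (q ^ (2 * m)) ^ t := by
          rw [← pow_mul]
          congr 1
          rw [ht]; ring
        rw [h2]
        simpa using Nat.sub_dvd_pow_sub_pow (q ^ (2 * m)) 1 t
      obtain ⟨t, ht⟩ := h1
      have h2 : (X ^ (q ^ (2 * m) - 1) - 1 : F[X]) ∣ X ^ (q ^ (2 * n) - 1) - 1 := by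
        have h3 := sub_dvd_pow_sub_pow (X ^ (q ^ (2 * m) - 1) : F[X]) 1 t
        rwa [← pow_mul, one_pow, ← ht] at h3
      have h3 : ∀ N : ℕ, 0 < N → (X ^ N - X : F[X]) = X * (X ^ (N - 1) - 1) := by
        intro N hN
        have hN1 : N - 1 + 1 = N := by omega
        rw [mul_sub, mul_one, ← pow_succ', hN1]
      rw [h3 _ (pow_pos hq0 _), h3 _ (pow_pos hq0 _)]
      exact mul_dvd_mul_left X h2
    have hgsplits : Splits (X ^ q ^ (2 * n) - X : F[X]) := by
      rw [Polynomial.splits_iff_card_roots, hgroots, hgdeg]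
      simpa using hF
    have hfsplits := Polynomial.Splits.of_dvd hgsplits hgne hdvd
    have hfcard : (X ^ q ^ (2 * m) - X : F[X]).roots.card = q ^ (2 * m) :=
      (Polynomial.splits_iff_card_roots.mp hfsplits).trans hfdeg
    have hfle := Polynomial.roots.le_of_dvd hgne hdvd
    rw [hgroots] at hfle
    have hfnodup : (X ^ q ^ (2 * m) - X : F[X]).roots.Nodup :=
      Multiset.nodup_of_le hfle Finset.univ.nodup
    have hsub : (X ^ q ^ (2 * m) - X : F[X]).roots.toFinset
        ⊆ Finset.univ.filter (fun x : F => x ^ q ^ (2 * m) = x) := by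
      intro x hx
      rw [Multiset.mem_toFinset, Polynomial.mem_roots hfne] at hx
      simp only [Finset.mem_filter, Finset.mem_univ, true_and]
      have h4 := hx
      rw [Polynomial.IsRoot.def] at h4
      simpa [sub_eq_zero] using h4
    calc q ^ (2 * m) = (X ^ q ^ (2 * m) - X : F[X]).roots.toFinset.card := by
          rw [Multiset.toFinset_card_of_nodup hfnodup, hfcard]
      _ ≤ _ := Finset.card_le_card hsub
  -- the trace polynomial
  have hPdef : True := trivial
  set P : F[X] := ∑ i ∈ Finset.range (m / ℓ), X ^ q ^ (2 * ℓ * i) with hP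
  have hPne : P ≠ 0 := by
    intro h0
    have hc : P.coeff (q ^ (2 * ℓ * (m / ℓ - 1))) = 1 := by
      rw [hP, Polynomial.finset_sum_coeff]
      rw [Finset.sum_eq_single (m / ℓ - 1)]
      · simp [Polynomial.coeff_X_pow]
      · intro i hi hne
        rw [Polynomial.coeff_X_pow, if_neg]
        intro heq
        apply hne
        have h1 : 2 * ℓ * i = 2 * ℓ * (m / ℓ - 1) :=
          Nat.pow_right_injective hq1 heq.symm
        exact Nat.eq_of_mul_eq_mul_left (by omega) h1
      · intro h
        exact absurd (Finset.mem_range.mpr (Nat.sub_lt hk0 one_pos)) h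
    rw [h0] at hc
    simp at hc
  have hPdeg : P.natDegree < q ^ (2 * m) := by
    have h1 : P.natDegree ≤ q ^ (2 * ℓ * (m / ℓ - 1)) := by
      apply Polynomial.natDegree_sum_le_of_forall_le
      intro i hi
      rw [Polynomial.natDegree_X_pow]
      apply Nat.pow_le_pow_right (by omega)
      have h2 : i ≤ m / ℓ - 1 := Nat.le_pred_of_lt (Finset.mem_range.mp hi)
      exact Nat.mul_le_mul_left _ h2
    refine lt_of_le_of_lt h1 (Nat.pow_lt_pow_right hq1 ?_)
    have h3 : 2 * ℓ * (m / ℓ - 1) < 2 * ℓ * (m / ℓ) :=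
      mul_lt_mul_of_pos_left (Nat.sub_lt hk0 one_pos) (by omega)
    calc 2 * ℓ * (m / ℓ - 1) < 2 * ℓ * (m / ℓ) := h3
      _ = 2 * m := by rw [mul_assoc, hml]
  constructor
  · -- m-nondegenerate → ℓ-nondegenerate
    intro H α hαW hα0
    by_contra hcon
    push_neg at hcon
    obtain ⟨β, hβW, hT⟩ := H α hαW hα0
    have hTS := hTfix α β
    have hroots : ∀ d : F, d ^ q ^ (2 * m) = d → P.eval (d * herm q n m α β) = 0 := by
      intro d hd
      set c : F := d ^ q ^ m with hc
      have hcS : c ^ q ^ (2 * m) = c := by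
        rw [hc, ← pow_mul, mul_comm, pow_mul, hd]
      have hcm : c ^ q ^ m = d := by
        rw [hc, ← pow_mul, ← pow_add]
        have h : m + m = 2 * m := by ring
        rw [h, hd]
      have hβ'W : c * β ∈ W := hW c hcS β hβW
      have h0 : herm q n ℓ α (c * β) = 0 := hcon (c * β) hβ'W
      rw [hkey α (c * β), hscale c hcS α β, hcm] at h0
      rw [hP, Polynomial.eval_finset_sum]
      simpa using h0
    have hcard2 : (Finset.univ.filter (fun x : F => x ^ q ^ (2 * m) = x)).card
        ≤ P.roots.toFinset.card := by
      apply Finset.card_le_card_of_injOn (fun d => d * herm q n m α β)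
      · intro d hd
        simp only [Finset.coe_filter, Finset.mem_filter, Finset.mem_univ, true_and, Set.mem_setOf_eq] at hd
        rw [Finset.mem_coe, Multiset.mem_toFinset, Polynomial.mem_roots hPne]
        exact hroots d hd
      · intro a _ b _ hab
        exact mul_right_cancel₀ hT hab
    have h2 : P.roots.toFinset.card ≤ P.natDegree :=
      le_trans (Multiset.toFinset_card_le _) (Polynomial.card_roots' P)
    omega
  · -- ℓ-nondegenerate → m-nondegenerate
    intro H α hαW hα0
    obtain ⟨β, hβW, hβ⟩ := H α hαW hα0
    refine ⟨β, hβW, fun h0 => hβ ?_⟩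
    rw [hkey α β, h0]
    refine Finset.sum_eq_zero fun i _ => zero_pow ?_
    exact (pow_pos (by omega : 0 < q) _).ne'
end
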